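/- arXiv:math/0604181 — 2 statements merged into one kernel-verified Lean document; each statement's English description precedes it below -/
import Mathlib

section
/- Let K be a field, let (A, ∇, 1) be an associative unital K-algebra with multiplication map ∇ : A ⊗ A → A, and let c : A ⊗ A → A ⊗ A be a K-linear map with c(1 ⊗ a) = a ⊗ 1 and c(a ⊗ 1) = 1 ⊗ a for all a ∈ A, satisfying the braid equation (c ⊗ id_A)(id_A ⊗ c)(c ⊗ id_A) = (id_A ⊗ c)(c ⊗ id_A)(id_A ⊗ c) and the compatibilities c ∘ (∇ ⊗ id_A) = (id_A ⊗ ∇)(c ⊗ id_A)(id_A ⊗ c) and c ∘ (id_A ⊗ ∇) = (∇ ⊗ id_A)(id_A ⊗ c)(c ⊗ id_A). Let Δ : A → A ⊗ A be a K-linear map satisfying Δ ∘ ∇ = (∇ ⊗ ∇)(id_A ⊗ c ⊗ id_A)(Δ ⊗ Δ), let P := {a ∈ A : Δ(a) = a ⊗ 1 + 1 ⊗ a}, and suppose c maps the image of P ⊗ P in A ⊗ A into itself and (c + id)(c − λ·id) = 0 on the image of P ⊗ P for some λ ∈ K. Then the map b_P : P ⊗ P → P defined by b_P(z) = ∇((c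 − λ·id)(z)) is a c_P-bracket on (P, c_P), where c_P is the restriction of c to the image of P ⊗ P; that is, c_P ∘ (b_P ⊗ id_P) = (id_P ⊗ b_P)(c_P ⊗ id_P)(id_P ⊗ c_P) and c_P ∘ (id_P ⊗ b_P) = (b_P ⊗ id_P)(id_P ⊗ c_P)(c_P ⊗ id_P) on P ⊗ P ⊗ P. -/
open TensorProduct

noncomputable section

variable {K : Type*} [Field K] {A : Type*} [Ring A] [Algebra K A]

/-- The endomorphism `id_A ⊗ c ⊗ id_A` of `(A ⊗ A) ⊗ (A ⊗ A)`, acting by `c` on the two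
middle tensor factors. -/
def mid4 (c : A ⊗[K] A →ₗ[K] A ⊗[K] A) :
    (A ⊗[K] A) ⊗[K] (A ⊗[K] A) →ₗ[K] (A ⊗[K] A) ⊗[K] (A ⊗[K] A) :=
  let e : ((A ⊗[K] A) ⊗[K] (A ⊗[K] A)) ≃ₗ[K] (A ⊗[K] ((A ⊗[K] A) ⊗[K] A)) :=
    (TensorProduct.assoc K A A (A ⊗[K] A)).trans
      (TensorProduct.congr (LinearEquiv.refl K A) (TensorProduct.assoc K A A A).symm)
  e.symm.toLinearMap ∘ₗ LinearMap.lTensor A (LinearMap.rTensor A c) ∘ₗ e.toLinearMap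

/-- The set of primitive elements of `A` relative to `Δ`. -/
def primSet (Δ : A →ₗ[K] A ⊗[K] A) : Set A :=
  {a : A | Δ a = a ⊗ₜ[K] (1 : A) + (1 : A) ⊗ₜ[K] a}

/-- The image of `P ⊗ P` in `A ⊗ A`, where `P` is the set of primitives: the span of the
elements `p ⊗ q` with `p, q` primitive. -/
def primTensorSq (Δ : A →ₗ[K] A ⊗[K] A) : Submodule K (A ⊗[K] A) :=
  Submodule.span K {z | ∃ p ∈ primSet Δ, ∃ q ∈ primSet Δ, z = p ⊗ₜ[K] q}

/-- The endomorphism `c ⊗ id_A` of `A ⊗ (A ⊗ A)` (transported along associativity). -/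
def opC1 (c : A ⊗[K] A →ₗ[K] A ⊗[K] A) :
    A ⊗[K] (A ⊗[K] A) →ₗ[K] A ⊗[K] (A ⊗[K] A) :=
  (TensorProduct.assoc K A A A).toLinearMap ∘ₗ
    LinearMap.rTensor A c ∘ₗ (TensorProduct.assoc K A A A).symm.toLinearMap

/-- The endomorphism `id_A ⊗ c` of `A ⊗ (A ⊗ A)`. -/
def opC2 (c : A ⊗[K] A →ₗ[K] A ⊗[K] A) :
    A ⊗[K] (A ⊗[K] A) →ₗ[K] A ⊗[K] (A ⊗[K] A) :=
  LinearMap.lTensor A c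

/-- The map `b ⊗ id_A : A ⊗ (A ⊗ A) → A ⊗ A`. -/
def opB1 (b : A ⊗[K] A →ₗ[K] A) :
    A ⊗[K] (A ⊗[K] A) →ₗ[K] A ⊗[K] A :=
  LinearMap.rTensor A b ∘ₗ (TensorProduct.assoc K A A A).symm.toLinearMap

/-- The map `id_A ⊗ b : A ⊗ (A ⊗ A) → A ⊗ A`. -/
def opB2 (b : A ⊗[K] A →ₗ[K] A) :
    A ⊗[K] (A ⊗[K] A) →ₗ[K] A ⊗[K] A :=
  LinearMap.lTensor A b

/-- The braid equation `c₁ ∘ c₂ ∘ c₁ = c₂ ∘ c₁ ∘ c₂`. -/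
def BraidEq (c : A ⊗[K] A →ₗ[K] A ⊗[K] A) : Prop :=
  opC1 c ∘ₗ opC2 c ∘ₗ opC1 c = opC2 c ∘ₗ opC1 c ∘ₗ opC2 c

/-- The image of `P ⊗ P ⊗ P` in `A ⊗ (A ⊗ A)`, `P` the set of primitives. -/
def primTensorCube (Δ : A →ₗ[K] A ⊗[K] A) : Submodule K (A ⊗[K] (A ⊗[K] A)) :=
  Submodule.span K
    {z | ∃ p ∈ primSet Δ, ∃ q ∈ primSet Δ, ∃ r ∈ primSet Δ, z = p ⊗ₜ[K] (q ⊗ₜ[K] r)}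

lemma opB1_comp (f : A ⊗[K] A →ₗ[K] A) (g : A ⊗[K] A →ₗ[K] A ⊗[K] A) :
    opB1 (f ∘ₗ g) = opB1 f ∘ₗ opC1 g := by
  refine LinearMap.ext fun w => ?_
  simp only [opB1, opC1, LinearMap.comp_apply, LinearMap.rTensor_comp, LinearEquiv.coe_coe,
    LinearEquiv.symm_apply_apply]

lemma opB2_comp (f : A ⊗[K] A →ₗ[K] A) (g : A ⊗[K] A →ₗ[K] A ⊗[K] A) :
    opB2 (f ∘ₗ g) = opB2 f ∘ₗ opC2 g := by
  simp only [opB2, opC2, LinearMap.lTensor_comp]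

lemma opC1_sub_smul (c : A ⊗[K] A →ₗ[K] A ⊗[K] A) (lam : K) :
    opC1 (c - lam • LinearMap.id) =
      opC1 c - lam • (LinearMap.id : A ⊗[K] (A ⊗[K] A) →ₗ[K] A ⊗[K] (A ⊗[K] A)) := by
  unfold opC1
  rw [LinearMap.rTensor_sub, LinearMap.rTensor_smul, LinearMap.rTensor_id]
  refine LinearMap.ext fun w => ?_
  simp only [LinearMap.comp_apply, LinearMap.sub_apply, LinearMap.smul_apply,
    LinearMap.id_apply, LinearEquiv.coe_coe, map_sub, map_smul,
    LinearEquiv.apply_symm_apply]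

lemma opC2_sub_smul (c : A ⊗[K] A →ₗ[K] A ⊗[K] A) (lam : K) :
    opC2 (c - lam • LinearMap.id) =
      opC2 c - lam • (LinearMap.id : A ⊗[K] (A ⊗[K] A) →ₗ[K] A ⊗[K] (A ⊗[K] A)) := by
  unfold opC2
  rw [LinearMap.lTensor_sub, LinearMap.lTensor_smul, LinearMap.lTensor_id]

/-- **Proposition.**  Under the hypotheses of the preceding proposition, together with the
braid equation and the algebra–braiding compatibilities (which say precisely that the
multiplication `∇` behaves like a `c`-bracket), the map `b_P(z) = ∇((c - lam•id) z)` is a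
`c_P`-bracket on the primitives `P`: the two bracket identities hold on (the image in
`A ⊗ A ⊗ A` of) `P ⊗ P ⊗ P`. -/
theorem primitive_bracket_is_bracket
    (c : A ⊗[K] A →ₗ[K] A ⊗[K] A)
    (hc1 : ∀ a : A, c ((1 : A) ⊗ₜ[K] a) = a ⊗ₜ[K] (1 : A))
    (hc2 : ∀ a : A, c (a ⊗ₜ[K] (1 : A)) = (1 : A) ⊗ₜ[K] a)
    (hbraid : BraidEq c)
    (halg1 : c ∘ₗ opB1 (LinearMap.mul' K A) = opB2 (LinearMap.mul' K A) ∘ₗ opC1 c ∘ₗ opC2 c)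
    (halg2 : c ∘ₗ opB2 (LinearMap.mul' K A) = opB1 (LinearMap.mul' K A) ∘ₗ opC2 c ∘ₗ opC1 c)
    (Δ : A →ₗ[K] A ⊗[K] A)
    (hcompat : Δ ∘ₗ LinearMap.mul' K A =
      TensorProduct.map (LinearMap.mul' K A) (LinearMap.mul' K A) ∘ₗ mid4 c ∘ₗ
        TensorProduct.map Δ Δ)
    (hcP : ∀ z ∈ primTensorSq Δ, c z ∈ primTensorSq Δ)
    (lam : K)
    (hHecke : ∀ z ∈ primTensorSq Δ,
      ((c + LinearMap.id) ∘ₗ (c - lam • (LinearMap.id : A ⊗[K] A →ₗ[K] A ⊗[K] A))) z = 0) :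
    ∀ z ∈ primTensorCube Δ,
      c (opB1 (LinearMap.mul' K A ∘ₗ
          (c - lam • (LinearMap.id : A ⊗[K] A →ₗ[K] A ⊗[K] A))) z) =
        opB2 (LinearMap.mul' K A ∘ₗ
          (c - lam • (LinearMap.id : A ⊗[K] A →ₗ[K] A ⊗[K] A))) (opC1 c (opC2 c z)) ∧
      c (opB2 (LinearMap.mul' K A ∘ₗ
          (c - lam • (LinearMap.id : A ⊗[K] A →ₗ[K] A ⊗[K] A))) z) =
        opB1 (LinearMap.mul' K A ∘ₗ
          (c - lam • (LinearMap.id : A ⊗[K] A →ₗ[K] A ⊗[K] A))) (opC2 c (opC1 c z)) := by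
  intro z _
  set g : A ⊗[K] A →ₗ[K] A ⊗[K] A := c - lam • LinearMap.id with hg
  set m := LinearMap.mul' K A with hm
  have key1 : c ∘ₗ opB1 (m ∘ₗ g) = (opB2 (m ∘ₗ g)) ∘ₗ opC1 c ∘ₗ opC2 c := by
    rw [opB1_comp, opB2_comp, hg, opC1_sub_smul, opC2_sub_smul]
    have braid := hbraid
    unfold BraidEq at braid
    refine LinearMap.ext fun w => ?_
    simp only [LinearMap.comp_apply, LinearMap.sub_apply, LinearMap.smul_apply,
      LinearMap.id_apply, map_sub, map_smul]
    have h1 : c (opB1 m (opC1 c w)) = opB2 m (opC1 c (opC2 c (opC1 c w))) :=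
      congrFun (congrArg DFunLike.coe halg1) (opC1 c w)
    have h2 : c (opB1 m w) = opB2 m (opC1 c (opC2 c w)) :=
      congrFun (congrArg DFunLike.coe halg1) w
    have h3 : opC1 c (opC2 c (opC1 c w)) = opC2 c (opC1 c (opC2 c w)) :=
      congrFun (congrArg DFunLike.coe braid) w
    rw [h1, h2, h3]
  have key2 : c ∘ₗ opB2 (m ∘ₗ g) = (opB1 (m ∘ₗ g)) ∘ₗ opC2 c ∘ₗ opC1 c := by
    rw [opB1_comp, opB2_comp, hg, opC1_sub_smul, opC2_sub_smul]
    have braid := hbraid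
    unfold BraidEq at braid
    refine LinearMap.ext fun w => ?_
    simp only [LinearMap.comp_apply, LinearMap.sub_apply, LinearMap.smul_apply,
      LinearMap.id_apply, map_sub, map_smul]
    have h1 : c (opB2 m (opC2 c w)) = opB1 m (opC2 c (opC1 c (opC2 c w))) :=
      congrFun (congrArg DFunLike.coe halg2) (opC2 c w)
    have h2 : c (opB2 m w) = opB1 m (opC2 c (opC1 c w)) :=
      congrFun (congrArg DFunLike.coe halg2) w
    have h3 : opC1 c (opC2 c (opC1 c w)) = opC2 c (opC1 c (opC2 c w)) :=
      congrFun (congrArg DFunLike.coe braid) w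
    rw [h1, h2, ← h3]
  constructor
  · have := congrFun (congrArg DFunLike.coe key1) z
    simpa using this
  · have := congrFun (congrArg DFunLike.coe key2) z
    simpa using this

end
end

section
/- Let K be a field, λ ∈ K, and let (B_n)_{n ≥ 1} be a family of K-vector spaces equipped with K-linear maps ∇_n : B_n ⊗ B_1 → B_{n+1} and Δ_n : B_{n+1} → B_n ⊗ B_1 for all n ≥ 1. Set Γ_n := ∇_n ∘ Δ_n : B_{n+1} → B_{n+1} and Γ_0 := id_{B_1}. Assume that each Δ_n is injective, that Δ_1 ∘ Γ_1 = (2)_λ · Δ_1, and that Δ_n ∘ Γ_n = Δ_n + λ·(Γ_{n−1} ⊗ id_{B_1}) ∘ Δ_n for all n ≥ 2. Then Γ_n = (n+1)_λ · id_{B_{n+1}} for every n ≥ 1. If moreover λ is regular (i.e. (k)_λ ≠ 0 for all k ≥ 1), then each ∇_n is surjective. -/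
open TensorProduct

noncomputable section

/-- The q-integer `(n)_lam = 1 + lam + ⋯ + lam^(n-1)`. -/
def qInt {K : Type*} [Field K] (lam : K) (n : ℕ) : K := ∑ i ∈ Finset.range n, lam ^ i

lemma qInt_succ {K : Type*} [Field K] (lam : K) (n : ℕ) :
    qInt lam (n + 1) = 1 + lam * qInt lam n := by
  simp [qInt, Finset.sum_range_succ', Finset.mul_sum, ← pow_succ', add_comm]

/-- **Key computation.**  Given spaces `B n` (`n ≥ 1`) with maps
`∇ n : B n ⊗ B 1 → B (n+1)` and `Δ n : B (n+1) → B n ⊗ B 1`, set `Γ n := ∇ n ∘ Δ n`.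
Assume each `Δ n` is injective, `Δ 1 ∘ Γ 1 = (2)_lam • Δ 1`, and
`Δ n ∘ Γ n = Δ n + lam • (Γ (n-1) ⊗ id) ∘ Δ n` for `n ≥ 2`.  Then
`Γ n = (n+1)_lam • id` for all `n ≥ 1`; if moreover `lam` is regular, every `∇ n` is
surjective. -/
theorem gamma_eq_qInt_smul_id
    {K : Type*} [Field K] (lam : K)
    (B : ℕ → Type*) [∀ n, AddCommGroup (B n)] [∀ n, Module K (B n)]
    (mul : ∀ n : ℕ, B n ⊗[K] B 1 →ₗ[K] B (n + 1))
    (com : ∀ n : ℕ, B (n + 1) →ₗ[K] B n ⊗[K] B 1)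
    (hinj : ∀ n ≥ 1, Function.Injective (com n))
    (h1 : com 1 ∘ₗ (mul 1 ∘ₗ com 1) = qInt lam 2 • com 1)
    (hrec : ∀ n ≥ 1, com (n + 1) ∘ₗ (mul (n + 1) ∘ₗ com (n + 1)) =
      com (n + 1) +
        lam • (LinearMap.rTensor (B 1) (mul n ∘ₗ com n) ∘ₗ com (n + 1))) :
    (∀ n ≥ 1, mul n ∘ₗ com n = qInt lam (n + 1) • LinearMap.id) ∧
    ((∀ k ≥ 1, qInt lam k ≠ 0) → ∀ n ≥ 1, Function.Surjective (mul n)) := by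
  have key : ∀ n ≥ 1, mul n ∘ₗ com n = qInt lam (n + 1) • LinearMap.id := by
    intro n hn
    induction n with
    | zero => omega
    | succ m ih =>
      rcases eq_or_lt_of_le hn with h | h
      · -- m = 0, n = 1
        have hm : m = 0 := by omega
        subst hm
        apply LinearMap.ext; intro x
        apply hinj 1 le_rfl
        have := congrArg (fun f => f x) h1
        simpa using this
      · have hm : 1 ≤ m := by omega
        have ihm := ih hm
        apply LinearMap.ext; intro x
        apply hinj (m + 1) (by omega)
        have := congrArg (fun f => f x) (hrec m hm)
        simp only [LinearMap.comp_apply, LinearMap.add_apply, LinearMap.smul_apply] at this ⊢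
        rw [this, ihm]
        rw [show qInt lam (m + 1 + 1) = 1 + lam * qInt lam (m + 1) from qInt_succ lam (m+1)]
        have : LinearMap.rTensor (B 1) (qInt lam (m + 1) • (LinearMap.id : B (m+1) →ₗ[K] B (m+1))) =
            qInt lam (m + 1) • LinearMap.id := by
          rw [LinearMap.rTensor_smul, LinearMap.rTensor_id]
        rw [this]
        simp [add_smul, mul_smul]
  refine ⟨key, fun hreg n hn => ?_⟩
  have h := key n hn
  intro y
  refine ⟨(qInt lam (n + 1))⁻¹ • com n y, ?_⟩
  have := congrArg (fun f => f ((qInt lam (n + 1))⁻¹ • y)) h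
  simp only [LinearMap.comp_apply, LinearMap.smul_apply, LinearMap.id_apply, map_smul] at this
  rw [map_smul, this, smul_smul, inv_mul_cancel₀ (hreg (n + 1) (by omega)), one_smul]

end
end
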